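/- arXiv:1407.7941 — 9 statements merged into one kernel-verified Lean document; each statement's English description precedes it below -/
import Mathlib

section
/- If q ≠ conj(q), then q^n = (q^n + conj(q)^n)/2 + ((q^n - conj(q)^n)/(q - conj(q))) · (q1 i + q2 j + q3 k), where q = q0 + q1 i + q2 j + q3 k. -/
open Quaternion

theorem add_div_two_add_sub_div_two {K : Type*} [DivisionRing K] [NeZero (2 : K)] (a b : K) :
    (a + b) / 2 + (a - b) / 2 = a := by
  rw [← add_div, add_add_sub_cancel, add_self_div_two]

namespace Quaternion

instance instCharZero {R : Type*} [CommRing R] [CharZero R] : CharZero ℍ[R] :=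
  charZero_of_injective_algebraMap coe_injective

theorem self_sub_star {R : Type*} [CommRing R] (a : ℍ[R]) : a - star a = 2 * a.im := by
  ext <;> simp [two_mul]

theorem im_eq_self_sub_star_div_two {R : Type*} [Field R] [LinearOrder R] [IsStrictOrderedRing R]
    (a : ℍ[R]) : a.im = (a - star a) / 2 := by
  rw [self_sub_star, two_mul, add_self_div_two]

end Quaternion

theorem quaternion_pow_decomposition (q : Quaternion ℝ) (hq : q ≠ star q) (n : ℕ) :
    q ^ n = (q ^ n + (star q) ^ n) / 2 +
      ((q ^ n - (star q) ^ n) * (q - star q)⁻¹) * q.im := by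
  rw [im_eq_self_sub_star_div_two, ← mul_div_assoc, inv_mul_cancel_right₀ (sub_ne_zero.mpr hq),
    add_div_two_add_sub_div_two]
end

section
/- Along the quaternion differential equation q' = a(c0 q - q^n) with c0 ∈ ℝ, the real polynomial S(q) = q^{n-1} + conj(q)^{n-1} - c0 satisfies dS/dt = (n-1)·(a q^{n-1}(c0 - q^{n-1}) + (c0 - conj(q)^{n-1}) conj(q)^{n-1} conj(a)); that is, for any quaternion q, the sum over l = 0..n-2 of (q^l a (c0 q - q^n) q^{n-2-l} + conj(q)^{n-2-l} conj(c0 q - q^n) conj(a) conj(q)^l) equals (n-1)(a q^{n-1}(c0 - q^{n-1}) + (c0 - conj(q)^{n-1}) conj(q)^{n-1} conj(a)). -/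
/-!
Both sides are sums of terms `x + star x = 2 * re x`, and the real part of a quaternion product
is invariant under cyclic permutation of the factors. Hence every summand
`q^l f q^(n-2-l) + conj(...)` equals `f q^(n-2) + conj(f q^(n-2))`, and for `f = a (c0 q - q^n)`
one has `f q^(n-2) = a q^(n-1) (c0 - q^(n-1))`.
-/

open Quaternion Finset

namespace Quaternion

variable {R : Type*} [CommRing R]

theorem re_mul_comm (a b : ℍ[R]) : (a * b).re = (b * a).re := by
  simp only [re_mul]; ring

theorem re_pow_mul_mul_pow (q f : ℍ[R]) (l m : ℕ) :
    (q ^ l * f * q ^ m).re = (f * q ^ (m + l)).re := by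
  rw [re_mul_comm, ← mul_assoc, ← pow_add, re_mul_comm]

theorem self_add_star_eq_of_re_eq {x y : ℍ[R]} (h : x.re = y.re) :
    x + star x = y + star y := by
  rw [self_add_star, self_add_star, h]

theorem sum_pow_mul_mul_pow_add_star (q f : ℍ[R]) (k : ℕ) :
    ∑ l ∈ range (k + 1), (q ^ l * f * q ^ (k - l) + star q ^ (k - l) * star f * star q ^ l) =
      (k + 1) • (f * q ^ k + star (f * q ^ k)) := by
  have hterm : ∀ l ∈ range (k + 1),
      q ^ l * f * q ^ (k - l) + star q ^ (k - l) * star f * star q ^ l =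
        f * q ^ k + star (f * q ^ k) := by
    intro l hl
    have hlk : k - l + l = k := Nat.sub_add_cancel (Nat.lt_succ_iff.mp (mem_range.mp hl))
    have hstar : star q ^ (k - l) * star f * star q ^ l = star (q ^ l * f * q ^ (k - l)) := by
      simp only [star_mul, star_pow, mul_assoc]
    rw [hstar]
    exact self_add_star_eq_of_re_eq (by rw [re_pow_mul_mul_pow, hlk])
  rw [sum_congr rfl hterm, sum_const, card_range]

end Quaternion

theorem sub_pow_succ_mul_pow {A : Type*} [Ring A] {c q : A} (hc : Commute c q) (k m : ℕ) :
    (c * q - q ^ (m + 1)) * q ^ k = q ^ (k + 1) * (c - q ^ m) := by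
  rw [sub_mul, mul_sub, mul_assoc, ← pow_succ', (hc.pow_right (k + 1)).eq, ← pow_add, ← pow_add,
    add_comm (m + 1) k, ← add_assoc, add_right_comm k 1 m]

/-- Derivative of `S(q) = q^{n-1} + conj(q)^{n-1} - c0` along `q' = a (c0 q - q^n)`. -/
theorem quaternion_S_derivative (a : Quaternion ℝ) (c0 : ℝ) (n : ℕ) (hn : 2 ≤ n)
    (q : Quaternion ℝ) :
    ∑ l ∈ Finset.range (n - 1),
        (q ^ l * (a * ((c0 : Quaternion ℝ) * q - q ^ n)) * q ^ (n - 2 - l) +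
          (star q) ^ (n - 2 - l) * star (a * ((c0 : Quaternion ℝ) * q - q ^ n)) *
            (star q) ^ l) =
      (n - 1 : ℕ) •
        (a * q ^ (n - 1) * ((c0 : Quaternion ℝ) - q ^ (n - 1)) +
          ((c0 : Quaternion ℝ) - (star q) ^ (n - 1)) * (star q) ^ (n - 1) * star a) := by
  obtain ⟨k, rfl⟩ := Nat.exists_eq_add_of_le' hn
  have hfq : a * ((c0 : ℍ[ℝ]) * q - q ^ (k + 2)) * q ^ k =
      a * q ^ (k + 1) * ((c0 : ℍ[ℝ]) - q ^ (k + 1)) := by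
    rw [mul_assoc, sub_pow_succ_mul_pow (coe_commutes c0 q), mul_assoc]
  have hstar : ((c0 : ℍ[ℝ]) - star q ^ (k + 1)) * star q ^ (k + 1) * star a =
      star (a * q ^ (k + 1) * ((c0 : ℍ[ℝ]) - q ^ (k + 1))) := by
    simp only [star_mul, star_sub, star_pow, star_coe, mul_assoc]
  simp only [show k + 2 - 1 = k + 1 from rfl, show k + 2 - 2 = k from rfl]
  rw [sum_pow_mul_mul_pow_add_star, hfq, hstar]
end

section
/- If a ∈ H is purely imaginary (a + conj(a) = 0), then along the quaternion ODE q' = a(c0 q - q^n) with c0 ∈ ℝ the function H(q) = (q conj(q))^{n-1} / (q^{n-1} + conj(q)^{n-1} - c0) is a first integral: at every point where the denominator is nonzero, the derivative of H along the vector field vanishes. More generally, dH/dt = (n-1)(a + conj(a))(c0 - H)H. -/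
/-!
Write m = n - 1. Since q q̄ = |q|² and Re(q̄^m) = Re(q^m), H = |q|^{2m} / (2 Re(q^m) - c0).
Along v = a(c0 q - q^{m+1}) one finds ⟨q, v⟩ = |q|²(c0 Re a - Re(a q^m)), and, because Re is a
trace (Re(xy) = Re(yx)), the derivative of Re(x^m) in direction v is
m Re(q^{m-1} v) = m (c0 Re(a q^m) - Re(a q^{2m})). The relation p² = 2 Re(p) p - |p|² for
p = q^m removes q^{2m}, and the quotient rule then collapses to 2m Re(a) (c0 - H) H.
-/

open Quaternion

section TraceFunctional

variable {𝕜 𝔸 F : Type*} [NontriviallyNormedField 𝕜] [NormedRing 𝔸] [NormedAlgebra 𝕜 𝔸]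
  [NormedAddCommGroup F] [NormedSpace 𝕜 F]

theorem hasFDerivAt_map_pow_of_map_mul_comm (τ : 𝔸 →L[𝕜] F)
    (hτ : ∀ x y, τ (x * y) = τ (y * x)) (m : ℕ) (q : 𝔸) :
    HasFDerivAt (fun x => τ (x ^ m))
      ((m : 𝕜) • τ.comp (ContinuousLinearMap.mul 𝕜 𝔸 (q ^ (m - 1)))) q := by
  refine (τ.hasFDerivAt.comp q (hasFDerivAt_pow' m)).congr_fderiv ?_
  ext v
  have hterm : ∀ i ∈ Finset.range m, τ (q ^ (m - 1 - i) * v * q ^ i) = τ (q ^ (m - 1) * v) := by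
    intro i hi
    rw [hτ, ← mul_assoc, ← pow_add, Nat.add_sub_of_le (by have := Finset.mem_range.1 hi; omega)]
  simp [map_sum, Finset.sum_congr rfl hterm, Nat.cast_smul_eq_nsmul]

end TraceFunctional

theorem HasFDerivAt.div {𝕜 E : Type*} [NontriviallyNormedField 𝕜] [NormedAddCommGroup E]
    [NormedSpace 𝕜 E] {c d : E → 𝕜} {c' d' : E →L[𝕜] 𝕜} {x : E}
    (hc : HasFDerivAt c c' x) (hd : HasFDerivAt d d' x) (hx : d x ≠ 0) :
    HasFDerivAt (fun y => c y / d y) ((d x ^ 2)⁻¹ • (d x • c' - c x • d')) x := by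
  simp only [div_eq_mul_inv]
  refine (hc.mul ((hasDerivAt_inv hx).comp_hasFDerivAt x hd)).congr_fderiv ?_
  ext v
  simp only [add_apply, smul_apply, sub_apply, smul_eq_mul, Function.comp_apply]
  field_simp
  ring

namespace Quaternion

theorem re_mul_comm_s7 (x y : ℍ[ℝ]) : (x * y).re = (y * x).re := by
  simp only [re_mul]; ring

theorem re_star_pow (x : ℍ[ℝ]) (m : ℕ) : (star x ^ m).re = (x ^ m).re := by
  rw [← star_pow, re_star]

theorem re_mul_coe (x : ℍ[ℝ]) (r : ℝ) : (x * r).re = r * x.re := by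
  rw [mul_coe_eq_smul, re_smul, smul_eq_mul]

theorem re_mul_coe_mul (x y : ℍ[ℝ]) (r : ℝ) : (x * (r * y)).re = r * (x * y).re := by
  rw [coe_mul_eq_smul, mul_smul_comm, re_smul, smul_eq_mul]

theorem sq_eq_two_re_mul_sub_normSq (p : ℍ[ℝ]) : p ^ 2 = ↑(2 * p.re) * p - ↑(normSq p) := by
  rw [← star_mul_self p, ← self_add_star']
  noncomm_ring

theorem re_mul_sq (a p : ℍ[ℝ]) : (a * p ^ 2).re = 2 * p.re * (a * p).re - normSq p * a.re := by
  rw [sq_eq_two_re_mul_sub_normSq, mul_sub, re_sub, re_mul_coe_mul, re_mul_coe]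

noncomputable def reCLM : ℍ[ℝ] →L[ℝ] ℝ := ⟨QuaternionAlgebra.reₗ _ _ _, continuous_re⟩

@[simp] theorem reCLM_apply (x : ℍ[ℝ]) : reCLM x = x.re := rfl

theorem hasFDerivAt_re_pow (m : ℕ) (q : ℍ[ℝ]) :
    HasFDerivAt (fun x : ℍ[ℝ] => (x ^ m).re)
      ((m : ℝ) • reCLM.comp (ContinuousLinearMap.mul ℝ ℍ[ℝ] (q ^ (m - 1)))) q :=
  hasFDerivAt_map_pow_of_map_mul_comm reCLM re_mul_comm_s7 m q

theorem hasFDerivAt_normSq (q : ℍ[ℝ]) : HasFDerivAt normSq (2 • innerSL ℝ q) q := by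
  have h : (normSq : ℍ[ℝ] → ℝ) = fun x => ‖x‖ ^ 2 := funext fun x => by
    rw [normSq_eq_norm_mul_self, sq]
  exact h ▸ (hasStrictFDerivAt_norm_sq q).hasFDerivAt

open scoped RealInnerProductSpace in
theorem inner_mul_sub_pow (a q : ℍ[ℝ]) (c0 : ℝ) (m : ℕ) :
    ⟪q, a * (c0 * q - q ^ (m + 1))⟫ = normSq q * (c0 * a.re - (a * q ^ m).re) := by
  have h : a * (c0 * q - q ^ (m + 1)) * star q = a * (↑(c0 * normSq q) - q ^ m * ↑(normSq q)) := by
    rw [mul_assoc, sub_mul, mul_assoc, self_mul_star, pow_succ, mul_assoc, self_mul_star, coe_mul]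
  rw [real_inner_comm, inner_def, h, mul_sub, re_sub, re_mul_coe, ← mul_assoc, re_mul_coe]
  ring

theorem re_pow_pred_mul_mul_sub_pow (a q : ℍ[ℝ]) (c0 : ℝ) {m : ℕ} (hm : m ≠ 0) :
    (q ^ (m - 1) * (a * (c0 * q - q ^ (m + 1)))).re =
      c0 * (a * q ^ m).re - (a * (q ^ m) ^ 2).re := by
  have h1 : q * q ^ (m - 1) = q ^ m := by rw [← pow_succ', Nat.sub_add_cancel (by omega)]
  have h2 : q ^ (m + 1) * q ^ (m - 1) = (q ^ m) ^ 2 := by rw [← pow_add, ← pow_mul]; congr 1; omega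
  rw [re_mul_comm_s7, mul_assoc, sub_mul, mul_assoc, h1, h2, mul_sub, re_sub, re_mul_coe_mul]

noncomputable def firstIntegral (c0 : ℝ) (m : ℕ) (x : ℍ[ℝ]) : ℝ :=
  normSq x ^ m / (2 * (x ^ m).re - c0)

theorem fderiv_firstIntegral_apply_field (a q : ℍ[ℝ]) (c0 : ℝ) {m : ℕ} (hm : m ≠ 0)
    (hden : 2 * (q ^ m).re - c0 ≠ 0) :
    fderiv ℝ (firstIntegral c0 m) q (a * (c0 * q - q ^ (m + 1))) =
      2 * m * a.re * (c0 - firstIntegral c0 m q) * firstIntegral c0 m q := by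
  have hN := (hasFDerivAt_normSq q).pow m
  have hD := ((hasFDerivAt_re_pow m q).const_mul 2).sub_const c0
  have hH : HasFDerivAt (firstIntegral c0 m) _ q := hN.div hD hden
  rw [hH.fderiv]
  simp only [smul_apply, sub_apply, smul_eq_mul, innerSL_apply_apply, inner_mul_sub_pow,
    ContinuousLinearMap.comp_apply, ContinuousLinearMap.mul_apply', reCLM_apply,
    re_pow_pred_mul_mul_sub_pow a q c0 hm, re_mul_sq, firstIntegral]
  have hpow : normSq q ^ (m - 1) * normSq q = normSq q ^ m := by
    rw [← pow_succ, Nat.sub_add_cancel (Nat.one_le_iff_ne_zero.2 hm)]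
  rw [map_pow, nsmul_eq_mul, nsmul_eq_mul, ← hpow]
  field_simp
  ring

end Quaternion

/-- Along `q' = a(c0 q - q^n)`, the function
`H(q) = (q conj q)^{n-1} / (q^{n-1} + conj(q)^{n-1} - c0)` satisfies
`dH/dt = (n-1)(a + conj a)(c0 - H) H`; in particular if `a + conj a = 0`
then `H` is a first integral. -/
theorem quaternion_H_first_integral (a : Quaternion ℝ) (c0 : ℝ) (n : ℕ) (hn : 2 ≤ n)
    (H : Quaternion ℝ → ℝ)
    (hH : H = fun q => ((q * star q).re) ^ (n - 1) /
      ((q ^ (n - 1) + (star q) ^ (n - 1)).re - c0))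
    (q : Quaternion ℝ)
    (hden : (q ^ (n - 1) + (star q) ^ (n - 1)).re - c0 ≠ 0) :
    fderiv ℝ H q (a * ((c0 : Quaternion ℝ) * q - q ^ n)) =
      ((n : ℝ) - 1) * (a + star a).re * (c0 - H q) * H q ∧
      (a + star a = 0 → fderiv ℝ H q (a * ((c0 : Quaternion ℝ) * q - q ^ n)) = 0) := by
  obtain ⟨m, rfl⟩ : ∃ m, n = m + 1 := ⟨n - 1, by omega⟩
  have hre_add (x : ℍ[ℝ]) : (x ^ m + star x ^ m).re = 2 * (x ^ m).re := by
    rw [re_add, re_star_pow, two_mul]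
  have hH_eq : H = firstIntegral c0 m := by
    simp only [hH, Nat.add_sub_cancel, hre_add, ← normSq_def]
    rfl
  rw [Nat.add_sub_cancel, hre_add] at hden
  have hderiv : fderiv ℝ H q (a * (c0 * q - q ^ (m + 1))) =
      m * (a + star a).re * (c0 - H q) * H q := by
    rw [hH_eq, fderiv_firstIntegral_apply_field a q c0 (by omega) hden, re_add, re_star]
    ring
  push_cast
  refine ⟨by rw [hderiv]; ring, fun ha => by simp [hderiv, ha]⟩
end

section
/- Consider the vector field on ℝ^4: q0' = (2q0 - c0) q1, q1' = c0 q0 - q0^2 + q1^2 + q2^2 + q3^2, q2' = (2q0 - c0) q3, q3' = -(2q0 - c0) q2, with c0 ∈ ℝ. Then H(q) = (q0^2 + q1^2 + q2^2 + q3^2)/(2q0 - c0) is a first integral on the open set where 2q0 ≠ c0. -/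
/-! Along the vector field `V`, the numerator `N = |q|²` and the denominator `D = 2q₀ - c₀` of `H`
have the same logarithmic derivative: `dN(V) = 2 q₁ N` and `dD(V) = 2 q₁ D`. Hence the quotient
rule gives `dH(V) = (dN(V) D - N dD(V)) / D² = 0`. -/

theorem fderiv_div_apply {𝕜 E : Type*} [NontriviallyNormedField 𝕜] [NormedAddCommGroup E]
    [NormedSpace 𝕜 E] {c d : E → 𝕜} {x : E} (hc : DifferentiableAt 𝕜 c x)
    (hd : DifferentiableAt 𝕜 d x) (hx : d x ≠ 0) (v : E) :
    fderiv 𝕜 (fun y => c y / d y) x v =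
      (fderiv 𝕜 c x v * d x - c x * fderiv 𝕜 d x v) / d x ^ 2 := by
  have hinv : HasFDerivAt (fun y => (d y)⁻¹) _ x := (hasFDerivAt_inv hx).comp x hd.hasFDerivAt
  simp only [div_eq_mul_inv]
  rw [(hc.hasFDerivAt.fun_mul hinv).fderiv]
  simp only [add_apply, smul_apply,
    ContinuousLinearMap.comp_apply, ContinuousLinearMap.toSpanSingleton_apply, smul_eq_mul, mul_neg]
  field_simp
  ring

theorem fderiv_sum_sq_apply (p v : ℝ × ℝ × ℝ × ℝ) :
    fderiv ℝ (fun q : ℝ × ℝ × ℝ × ℝ => q.1 ^ 2 + q.2.1 ^ 2 + q.2.2.1 ^ 2 + q.2.2.2 ^ 2) p v =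
      2 * (p.1 * v.1 + p.2.1 * v.2.1 + p.2.2.1 * v.2.2.1 + p.2.2.2 * v.2.2.2) := by
  simp (disch := fun_prop) [fderiv_fun_add, fderiv_fun_pow, fderiv.fst, fderiv.snd]
  ring

/-- `H = (q0²+q1²+q2²+q3²)/(2q0 - c0)` is a first integral of the component
form of `q' = i(c0 q - q²)` on the open set `2q0 ≠ c0`. -/
theorem H_first_integral_n2 (c0 : ℝ)
    (V : ℝ × ℝ × ℝ × ℝ → ℝ × ℝ × ℝ × ℝ)
    (hV : V = fun p =>
      ((2 * p.1 - c0) * p.2.1,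
       c0 * p.1 - p.1 ^ 2 + p.2.1 ^ 2 + p.2.2.1 ^ 2 + p.2.2.2 ^ 2,
       (2 * p.1 - c0) * p.2.2.2,
       -(2 * p.1 - c0) * p.2.2.1))
    (H : ℝ × ℝ × ℝ × ℝ → ℝ)
    (hH : H = fun p =>
      (p.1 ^ 2 + p.2.1 ^ 2 + p.2.2.1 ^ 2 + p.2.2.2 ^ 2) / (2 * p.1 - c0))
    (p : ℝ × ℝ × ℝ × ℝ) (hp : 2 * p.1 ≠ c0) :
    fderiv ℝ H p (V p) = 0 := by
  subst hV hH
  set D : ℝ × ℝ × ℝ × ℝ → ℝ := fun q => 2 * q.1 - c0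
  have hD : D p ≠ 0 := sub_ne_zero.mpr hp
  have hD' (v : ℝ × ℝ × ℝ × ℝ) : fderiv ℝ D p v = 2 * v.1 := by
    simp (disch := fun_prop) [D, fderiv_fun_sub, fderiv_const_mul, fderiv_fst]
  rw [fderiv_div_apply (d := D) (by fun_prop) (by fun_prop) hD, fderiv_sum_sq_apply, hD',
    div_eq_zero_iff]
  left
  ring
end

section
/- Consider the vector field on ℝ^4: q0' = -(c0 - 3q0^2 + q1^2 + q2^2 + q3^2) q1, q1' = (c0 - q0^2 + 3q1^2 + 3q2^2 + 3q3^2) q0, q2' = -(c0 - 3q0^2 + q1^2 + q2^2 + q3^2) q3, q3' = (c0 - 3q0^2 + q1^2 + q2^2 + q3^2) q2. Then H(q) = (q0^2+q1^2+q2^2+q3^2)^2 / (2(q0^2 - q1^2 - q2^2 - q3^2) - c0) and F(q) = q2^2 + q3^2 are both first integrals on the open set where 2(q0^2 - q1^2 - q2^2 - q3^2) ≠ c0. -/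
/-!
Write `r = q0² + q1² + q2² + q3²` and `D = 2(q0² - q1² - q2² - q3²) - c0`. Along the field,
`q0 q0' + q1 q1' + q2 q2' + q3 q3' = 2 q0 q1 r` and `q0 q0' - q1 q1' - q2 q2' - q3 q3' = 2 q0 q1 D`,
so `r²` and `D` both grow at the logarithmic rate `8 q0 q1` and their quotient `H` is conserved.
The field rotates the pair `(q2, q3)`, which conserves `F`.
-/

section QuotientRule

variable {𝕜 E : Type*} [NontriviallyNormedField 𝕜] [NormedAddCommGroup E] [NormedSpace 𝕜 E]

theorem fderiv_div_apply_eq_zero {n d : E → 𝕜} {p v : E} (hn : DifferentiableAt 𝕜 n p)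
    (hd : DifferentiableAt 𝕜 d p) (hdp : d p ≠ 0)
    (h : fderiv 𝕜 n p v * d p = n p * fderiv 𝕜 d p v) :
    fderiv 𝕜 (fun q => n q / d q) p v = 0 := by
  have hquot := hn.hasFDerivAt.fun_mul ((hasFDerivAt_inv hdp).comp p hd.hasFDerivAt)
  simp only [Function.comp_apply, ← div_eq_mul_inv] at hquot
  rw [hquot.fderiv]
  simp only [add_apply, smul_apply, ContinuousLinearMap.comp_apply,
    ContinuousLinearMap.toSpanSingleton_apply, smul_eq_mul, mul_neg]
  field_simp
  linear_combination h

end QuotientRule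

section Coordinates

variable {𝕜 : Type*} [NontriviallyNormedField 𝕜] (p v : 𝕜 × 𝕜 × 𝕜 × 𝕜)

theorem fderiv_sumSq_sq_apply :
    fderiv 𝕜 (fun q : 𝕜 × 𝕜 × 𝕜 × 𝕜 =>
        (q.1 ^ 2 + q.2.1 ^ 2 + q.2.2.1 ^ 2 + q.2.2.2 ^ 2) ^ 2) p v =
      4 * (p.1 ^ 2 + p.2.1 ^ 2 + p.2.2.1 ^ 2 + p.2.2.2 ^ 2) *
        (p.1 * v.1 + p.2.1 * v.2.1 + p.2.2.1 * v.2.2.1 + p.2.2.2 * v.2.2.2) := by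
  simp (disch := fun_prop) only [fderiv_fun_pow, Nat.add_one_sub_one, pow_one, smul_add,
    nsmul_eq_mul, Nat.cast_ofNat, fderiv_fun_add, fderiv.fst, fderiv_fun_id,
    ContinuousLinearMap.comp_id, fderiv.snd, add_apply, smul_apply, ContinuousLinearMap.coe_fst',
    smul_eq_mul, ContinuousLinearMap.comp_apply, ContinuousLinearMap.coe_snd']
  ring

theorem fderiv_two_mul_lorentzSq_sub_apply (c : 𝕜) :
    fderiv 𝕜 (fun q : 𝕜 × 𝕜 × 𝕜 × 𝕜 =>
        2 * (q.1 ^ 2 - q.2.1 ^ 2 - q.2.2.1 ^ 2 - q.2.2.2 ^ 2) - c) p v =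
      4 * (p.1 * v.1 - p.2.1 * v.2.1 - p.2.2.1 * v.2.2.1 - p.2.2.2 * v.2.2.2) := by
  simp (disch := fun_prop) only [fderiv_fun_sub, fderiv_const_mul, fderiv_fun_pow,
    Nat.add_one_sub_one, pow_one, nsmul_eq_mul, Nat.cast_ofNat, fderiv.fst, fderiv_fun_id,
    ContinuousLinearMap.comp_id, fderiv.snd, fderiv_fun_const, Pi.zero_apply, sub_zero, smul_apply,
    sub_apply, ContinuousLinearMap.coe_fst', smul_eq_mul, ContinuousLinearMap.comp_apply,
    ContinuousLinearMap.coe_snd']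
  ring

theorem fderiv_sq_add_sq_apply :
    fderiv 𝕜 (fun q : 𝕜 × 𝕜 × 𝕜 × 𝕜 => q.2.2.1 ^ 2 + q.2.2.2 ^ 2) p v =
      2 * (p.2.2.1 * v.2.2.1 + p.2.2.2 * v.2.2.2) := by
  simp (disch := fun_prop) only [fderiv_fun_add, fderiv_fun_pow, Nat.add_one_sub_one, pow_one,
    nsmul_eq_mul, Nat.cast_ofNat, fderiv.fst, fderiv.snd, fderiv_fun_id,
    ContinuousLinearMap.comp_id, add_apply, smul_apply, ContinuousLinearMap.comp_apply,
    ContinuousLinearMap.coe_snd', ContinuousLinearMap.coe_fst', smul_eq_mul]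
  ring

end Coordinates

def cubicQuatField (c0 : ℝ) (p : ℝ × ℝ × ℝ × ℝ) : ℝ × ℝ × ℝ × ℝ :=
  (-(c0 - 3 * p.1 ^ 2 + p.2.1 ^ 2 + p.2.2.1 ^ 2 + p.2.2.2 ^ 2) * p.2.1,
   (c0 - p.1 ^ 2 + 3 * p.2.1 ^ 2 + 3 * p.2.2.1 ^ 2 + 3 * p.2.2.2 ^ 2) * p.1,
   -(c0 - 3 * p.1 ^ 2 + p.2.1 ^ 2 + p.2.2.1 ^ 2 + p.2.2.2 ^ 2) * p.2.2.2,
   (c0 - 3 * p.1 ^ 2 + p.2.1 ^ 2 + p.2.2.1 ^ 2 + p.2.2.2 ^ 2) * p.2.2.1)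

section CubicQuatField

variable (c0 : ℝ) (p : ℝ × ℝ × ℝ × ℝ)

theorem dot_cubicQuatField :
    p.1 * (cubicQuatField c0 p).1 + p.2.1 * (cubicQuatField c0 p).2.1 +
        p.2.2.1 * (cubicQuatField c0 p).2.2.1 + p.2.2.2 * (cubicQuatField c0 p).2.2.2 =
      2 * p.1 * p.2.1 * (p.1 ^ 2 + p.2.1 ^ 2 + p.2.2.1 ^ 2 + p.2.2.2 ^ 2) := by
  unfold cubicQuatField; ring

theorem lorentzDot_cubicQuatField :
    p.1 * (cubicQuatField c0 p).1 - p.2.1 * (cubicQuatField c0 p).2.1 -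
        p.2.2.1 * (cubicQuatField c0 p).2.2.1 - p.2.2.2 * (cubicQuatField c0 p).2.2.2 =
      2 * p.1 * p.2.1 * (2 * (p.1 ^ 2 - p.2.1 ^ 2 - p.2.2.1 ^ 2 - p.2.2.2 ^ 2) - c0) := by
  unfold cubicQuatField; ring

theorem dot_cubicQuatField_snd_snd :
    p.2.2.1 * (cubicQuatField c0 p).2.2.1 + p.2.2.2 * (cubicQuatField c0 p).2.2.2 = 0 := by
  unfold cubicQuatField; ring

end CubicQuatField

/-- `H` and `F` are first integrals of the component form of
`q' = i(c0 q - q³)` on the open set `2(q0²-q1²-q2²-q3²) ≠ c0`. -/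
theorem HF_first_integrals_n3 (c0 : ℝ)
    (V : ℝ × ℝ × ℝ × ℝ → ℝ × ℝ × ℝ × ℝ)
    (hV : V = fun p =>
      (-(c0 - 3 * p.1 ^ 2 + p.2.1 ^ 2 + p.2.2.1 ^ 2 + p.2.2.2 ^ 2) * p.2.1,
       (c0 - p.1 ^ 2 + 3 * p.2.1 ^ 2 + 3 * p.2.2.1 ^ 2 + 3 * p.2.2.2 ^ 2) * p.1,
       -(c0 - 3 * p.1 ^ 2 + p.2.1 ^ 2 + p.2.2.1 ^ 2 + p.2.2.2 ^ 2) * p.2.2.2,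
       (c0 - 3 * p.1 ^ 2 + p.2.1 ^ 2 + p.2.2.1 ^ 2 + p.2.2.2 ^ 2) * p.2.2.1))
    (H F : ℝ × ℝ × ℝ × ℝ → ℝ)
    (hH : H = fun p =>
      (p.1 ^ 2 + p.2.1 ^ 2 + p.2.2.1 ^ 2 + p.2.2.2 ^ 2) ^ 2 /
        (2 * (p.1 ^ 2 - p.2.1 ^ 2 - p.2.2.1 ^ 2 - p.2.2.2 ^ 2) - c0))
    (hF : F = fun p => p.2.2.1 ^ 2 + p.2.2.2 ^ 2)
    (p : ℝ × ℝ × ℝ × ℝ)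
    (hp : 2 * (p.1 ^ 2 - p.2.1 ^ 2 - p.2.2.1 ^ 2 - p.2.2.2 ^ 2) ≠ c0) :
    fderiv ℝ H p (V p) = 0 ∧ fderiv ℝ F p (V p) = 0 := by
  obtain rfl : V = cubicQuatField c0 := hV
  subst hH hF
  refine ⟨fderiv_div_apply_eq_zero (by fun_prop) (by fun_prop) (sub_ne_zero_of_ne hp) ?_, ?_⟩
  · rw [fderiv_sumSq_sq_apply, fderiv_two_mul_lorentzSq_sub_apply, dot_cubicQuatField,
      lorentzDot_cubicQuatField]
    ring
  · rw [fderiv_sq_add_sq_apply, dot_cubicQuatField_snd_snd, mul_zero]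
end

section
/- Consider the vector field on ℝ^4: q0' = c0 q0 - c1 q1 - q0^2 + q1^2 + q2^2 + q3^2, q1' = c1 q0 + (c0 - 2q0) q1, q2' = (c0 - 2q0) q2 - c1 q3, q3' = c1 q2 + (c0 - 2q0) q3. If c0 = 0, then H(q) = (q0^2+q1^2+q2^2+q3^2)/(2c0 q0 + 2c1 q1 - c0^2 - c1^2) is a first integral on the set where the denominator is nonzero. -/
/-!
For `p = (q0, q1, q2, q3)` write `N = q0² + q1² + q2² + q3²` and
`D = 2c0 q0 + 2c1 q1 - c0² - c1²`, so that `H = N / D`.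
For every `c0` the field satisfies `N' = 2(c0 - q0) N`, and when `c0 = 0` also `D' = -2q0 D`:
numerator and denominator are Darboux functions with the same cofactor, so by the quotient rule
the derivative of `N / D` along the field vanishes wherever `D ≠ 0`.
-/

section QuotientRule

variable {𝕜 E : Type*} [NontriviallyNormedField 𝕜] [NormedAddCommGroup E] [NormedSpace 𝕜 E]
  {f g : E → 𝕜} {x v : E}

theorem fderiv_fun_div_apply (hf : DifferentiableAt 𝕜 f x) (hg : DifferentiableAt 𝕜 g x)
    (hgx : g x ≠ 0) :
    fderiv 𝕜 (fun y => f y / g y) x v =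
      (fderiv 𝕜 f x v * g x - f x * fderiv 𝕜 g x v) / g x ^ 2 := by
  have hquot : HasFDerivAt (fun y => f y * (g y)⁻¹) _ x :=
    hf.hasFDerivAt.mul ((hasDerivAt_inv hgx).comp_hasFDerivAt x hg.hasFDerivAt)
  simp only [div_eq_mul_inv]
  rw [hquot.fderiv]
  simp only [add_apply, smul_apply, smul_eq_mul]
  field_simp
  ring

theorem fderiv_fun_div_apply_eq_zero_of_cofactor {c : 𝕜} (hf : DifferentiableAt 𝕜 f x)
    (hg : DifferentiableAt 𝕜 g x) (hgx : g x ≠ 0) (hfv : fderiv 𝕜 f x v = c * f x)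
    (hgv : fderiv 𝕜 g x v = c * g x) :
    fderiv 𝕜 (fun y => f y / g y) x v = 0 := by
  rw [fderiv_fun_div_apply hf hg hgx, hfv, hgv]
  ring

end QuotientRule

namespace QuaternionRiccati

def field (c0 c1 : ℝ) (p : ℝ × ℝ × ℝ × ℝ) : ℝ × ℝ × ℝ × ℝ :=
  (c0 * p.1 - c1 * p.2.1 - p.1 ^ 2 + p.2.1 ^ 2 + p.2.2.1 ^ 2 + p.2.2.2 ^ 2,
   c1 * p.1 + (c0 - 2 * p.1) * p.2.1,
   (c0 - 2 * p.1) * p.2.2.1 - c1 * p.2.2.2,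
   c1 * p.2.2.1 + (c0 - 2 * p.1) * p.2.2.2)

def normSq (p : ℝ × ℝ × ℝ × ℝ) : ℝ := p.1 ^ 2 + p.2.1 ^ 2 + p.2.2.1 ^ 2 + p.2.2.2 ^ 2

def denom (c0 c1 : ℝ) (p : ℝ × ℝ × ℝ × ℝ) : ℝ :=
  2 * c0 * p.1 + 2 * c1 * p.2.1 - c0 ^ 2 - c1 ^ 2

theorem differentiable_normSq : Differentiable ℝ normSq := by
  unfold normSq
  fun_prop

theorem differentiable_denom (c0 c1 : ℝ) : Differentiable ℝ (denom c0 c1) := by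
  unfold denom
  fun_prop

theorem fderiv_normSq_apply (p v : ℝ × ℝ × ℝ × ℝ) :
    fderiv ℝ normSq p v =
      2 * (p.1 * v.1 + p.2.1 * v.2.1 + p.2.2.1 * v.2.2.1 + p.2.2.2 * v.2.2.2) := by
  have hid := hasFDerivAt_id (𝕜 := ℝ) p
  have h : HasFDerivAt normSq _ p :=
    (((hid.fst.pow 2).fun_add (hid.snd.fst.pow 2)).fun_add (hid.snd.snd.fst.pow 2)).fun_add
      (hid.snd.snd.snd.pow 2)
  rw [h.fderiv]
  simp only [Nat.add_one_sub_one, pow_one, nsmul_eq_mul, Nat.cast_ofNat, id_eq,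
    ContinuousLinearMap.comp_id, add_apply, smul_apply, ContinuousLinearMap.coe_fst', smul_eq_mul,
    ContinuousLinearMap.comp_apply, ContinuousLinearMap.coe_snd']
  ring

theorem fderiv_denom_apply (c0 c1 : ℝ) (p v : ℝ × ℝ × ℝ × ℝ) :
    fderiv ℝ (denom c0 c1) p v = 2 * c0 * v.1 + 2 * c1 * v.2.1 := by
  have hid := hasFDerivAt_id (𝕜 := ℝ) p
  have h : HasFDerivAt (denom c0 c1) _ p :=
    (((hid.fst.const_mul (2 * c0)).fun_add (hid.snd.fst.const_mul (2 * c1))).sub_const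
      (c0 ^ 2)).sub_const (c1 ^ 2)
  rw [h.fderiv]
  simp

theorem fderiv_normSq_field (c0 c1 : ℝ) (p : ℝ × ℝ × ℝ × ℝ) :
    fderiv ℝ normSq p (field c0 c1 p) = 2 * (c0 - p.1) * normSq p := by
  rw [fderiv_normSq_apply]
  simp only [field, normSq]
  ring

theorem fderiv_denom_field (c1 : ℝ) (p : ℝ × ℝ × ℝ × ℝ) :
    fderiv ℝ (denom 0 c1) p (field 0 c1 p) = 2 * (0 - p.1) * denom 0 c1 p := by
  rw [fderiv_denom_apply]
  simp only [field, denom]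
  ring

end QuaternionRiccati

/-- For the component form of `q' = (c0 + c1 i) q - q²` with `c0 = 0`,
`H = (q0²+q1²+q2²+q3²)/(2c0 q0 + 2c1 q1 - c0² - c1²)` is a first integral
where the denominator is nonzero. -/
theorem H_first_integral_riccati (c0 c1 : ℝ) (hc0 : c0 = 0)
    (V : ℝ × ℝ × ℝ × ℝ → ℝ × ℝ × ℝ × ℝ)
    (hV : V = fun p =>
      (c0 * p.1 - c1 * p.2.1 - p.1 ^ 2 + p.2.1 ^ 2 + p.2.2.1 ^ 2 + p.2.2.2 ^ 2,
       c1 * p.1 + (c0 - 2 * p.1) * p.2.1,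
       (c0 - 2 * p.1) * p.2.2.1 - c1 * p.2.2.2,
       c1 * p.2.2.1 + (c0 - 2 * p.1) * p.2.2.2))
    (H : ℝ × ℝ × ℝ × ℝ → ℝ)
    (hH : H = fun p =>
      (p.1 ^ 2 + p.2.1 ^ 2 + p.2.2.1 ^ 2 + p.2.2.2 ^ 2) /
        (2 * c0 * p.1 + 2 * c1 * p.2.1 - c0 ^ 2 - c1 ^ 2))
    (p : ℝ × ℝ × ℝ × ℝ)
    (hp : 2 * c0 * p.1 + 2 * c1 * p.2.1 - c0 ^ 2 - c1 ^ 2 ≠ 0) :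
    fderiv ℝ H p (V p) = 0 := by
  subst hc0 hV hH
  open QuaternionRiccati in
  exact fderiv_fun_div_apply_eq_zero_of_cofactor (differentiable_normSq p)
    (differentiable_denom 0 c1 p) hp (fderiv_normSq_field 0 c1 p) (fderiv_denom_field c1 p)
end

section
/- Consider the vector field on ℝ^4: q0' = -c1 q1 - q0^2 + q1^2 + q2^2 + q3^2, q1' = c1 q0 - 2q0 q1, q2' = -2q0 q2 - c1 q3, q3' = c1 q2 - 2q0 q3 (c1 ∈ ℝ nonzero). Then F(q) = (q0^2+q1^2+q2^2+q3^2)^2 / ((2q1 - c1)^2 + 4q2^2 + 4q3^2) is a first integral on the set where the denominator is nonzero. -/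
/-!
Both the numerator `N = |q|⁴` and the denominator `D = (2q₁ - c₁)² + 4q₂² + 4q₃²` of `F` are
Darboux polynomials of the vector field with the same cofactor `-4 q₀`: along `q' = c q - q²`
with `c` purely imaginary one has `(|q|²)' = -2 q₀ |q|²`, and likewise `D' = -4 q₀ D`.
The derivative of a quotient of two such functions vanishes.
-/

open ContinuousLinearMap

theorem fderiv_div_apply_eq_zero_of_cofactor {𝕜 E : Type*} [NontriviallyNormedField 𝕜]
    [NormedAddCommGroup E] [NormedSpace 𝕜 E] {N D : E → 𝕜} {p v : E} {k : 𝕜}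
    (hN : DifferentiableAt 𝕜 N p) (hD : DifferentiableAt 𝕜 D p) (hDp : D p ≠ 0)
    (hNv : fderiv 𝕜 N p v = k * N p) (hDv : fderiv 𝕜 D p v = k * D p) :
    fderiv 𝕜 (fun x => N x / D x) p v = 0 := by
  have h : HasFDerivAt (fun x => N x * (D x)⁻¹) _ p :=
    hN.hasFDerivAt.fun_mul ((hasFDerivAt_inv hDp).comp p hD.hasFDerivAt)
  simp only [div_eq_mul_inv, h.fderiv, add_apply, smul_apply, comp_apply, toSpanSingleton_apply,
    smul_eq_mul, hNv, hDv]
  field_simp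
  ring

def riccatiField (c : ℝ) (q : ℝ × ℝ × ℝ × ℝ) : ℝ × ℝ × ℝ × ℝ :=
  (-(c * q.2.1) - q.1 ^ 2 + q.2.1 ^ 2 + q.2.2.1 ^ 2 + q.2.2.2 ^ 2,
   c * q.1 - 2 * q.1 * q.2.1,
   -(2 * q.1 * q.2.2.1) - c * q.2.2.2,
   c * q.2.2.1 - 2 * q.1 * q.2.2.2)

theorem fderiv_normSq_sq_riccatiField (c : ℝ) (p : ℝ × ℝ × ℝ × ℝ) :
    fderiv ℝ (fun q : ℝ × ℝ × ℝ × ℝ => (q.1 ^ 2 + q.2.1 ^ 2 + q.2.2.1 ^ 2 + q.2.2.2 ^ 2) ^ 2) p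
        (riccatiField c p) =
      -4 * p.1 * (p.1 ^ 2 + p.2.1 ^ 2 + p.2.2.1 ^ 2 + p.2.2.2 ^ 2) ^ 2 := by
  simp (disch := fun_prop) only [fderiv_fun_pow, Nat.add_one_sub_one, pow_one, smul_add,
    nsmul_eq_mul, Nat.cast_ofNat, fderiv_fun_add, fderiv.fst, fderiv_fun_id, comp_id, fderiv.snd,
    riccatiField, add_apply, smul_apply, coe_fst', smul_eq_mul, comp_apply, coe_snd']
  ring

theorem fderiv_denominator_riccatiField (c : ℝ) (p : ℝ × ℝ × ℝ × ℝ) :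
    fderiv ℝ (fun q : ℝ × ℝ × ℝ × ℝ => (2 * q.2.1 - c) ^ 2 + 4 * q.2.2.1 ^ 2 + 4 * q.2.2.2 ^ 2) p
        (riccatiField c p) =
      -4 * p.1 * ((2 * p.2.1 - c) ^ 2 + 4 * p.2.2.1 ^ 2 + 4 * p.2.2.2 ^ 2) := by
  simp (disch := fun_prop) only [fderiv_fun_add, fderiv_fun_pow, Nat.add_one_sub_one, pow_one,
    nsmul_eq_mul, Nat.cast_ofNat, fderiv_fun_sub, fderiv_const_mul, fderiv.fst, fderiv.snd,
    fderiv_fun_id, comp_id, fderiv_fun_const, Pi.zero_apply, sub_zero, riccatiField, add_apply,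
    smul_apply, comp_apply, coe_snd', coe_fst', smul_eq_mul]
  ring

theorem F_first_integral_riccati_general (c1 : ℝ)
    (V : ℝ × ℝ × ℝ × ℝ → ℝ × ℝ × ℝ × ℝ)
    (hV : V = fun p =>
      (-(c1 * p.2.1) - p.1 ^ 2 + p.2.1 ^ 2 + p.2.2.1 ^ 2 + p.2.2.2 ^ 2,
       c1 * p.1 - 2 * p.1 * p.2.1,
       -(2 * p.1 * p.2.2.1) - c1 * p.2.2.2,
       c1 * p.2.2.1 - 2 * p.1 * p.2.2.2))
    (F : ℝ × ℝ × ℝ × ℝ → ℝ)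
    (hF : F = fun p =>
      (p.1 ^ 2 + p.2.1 ^ 2 + p.2.2.1 ^ 2 + p.2.2.2 ^ 2) ^ 2 /
        ((2 * p.2.1 - c1) ^ 2 + 4 * p.2.2.1 ^ 2 + 4 * p.2.2.2 ^ 2))
    (p : ℝ × ℝ × ℝ × ℝ)
    (hp : (2 * p.2.1 - c1) ^ 2 + 4 * p.2.2.1 ^ 2 + 4 * p.2.2.2 ^ 2 ≠ 0) :
    fderiv ℝ F p (V p) = 0 := by
  subst hV hF
  exact fderiv_div_apply_eq_zero_of_cofactor (by fun_prop) (by fun_prop) hp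
    (fderiv_normSq_sq_riccatiField c1 p) (fderiv_denominator_riccatiField c1 p)

/-- For the component form of `q' = (c1 i) q - q²` with `c1 ≠ 0`,
`F = (q0²+q1²+q2²+q3²)² / ((2q1 - c1)² + 4q2² + 4q3²)` is a first integral
where the denominator is nonzero. -/
theorem F_first_integral_riccati (c1 : ℝ) (hc1 : c1 ≠ 0)
    (V : ℝ × ℝ × ℝ × ℝ → ℝ × ℝ × ℝ × ℝ)
    (hV : V = fun p =>
      (-(c1 * p.2.1) - p.1 ^ 2 + p.2.1 ^ 2 + p.2.2.1 ^ 2 + p.2.2.2 ^ 2,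
       c1 * p.1 - 2 * p.1 * p.2.1,
       -(2 * p.1 * p.2.2.1) - c1 * p.2.2.2,
       c1 * p.2.2.1 - 2 * p.1 * p.2.2.2))
    (F : ℝ × ℝ × ℝ × ℝ → ℝ)
    (hF : F = fun p =>
      (p.1 ^ 2 + p.2.1 ^ 2 + p.2.2.1 ^ 2 + p.2.2.2 ^ 2) ^ 2 /
        ((2 * p.2.1 - c1) ^ 2 + 4 * p.2.2.1 ^ 2 + 4 * p.2.2.2 ^ 2))
    (p : ℝ × ℝ × ℝ × ℝ)
    (hp : (2 * p.2.1 - c1) ^ 2 + 4 * p.2.2.1 ^ 2 + 4 * p.2.2.2 ^ 2 ≠ 0) :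
    fderiv ℝ F p (V p) = 0 :=
  F_first_integral_riccati_general c1 V hV F hF p hp
end

section
/- Consider the vector field on ℝ^4: q0' = a1 q1 A - a0 q0 B, q1' = -a0 q1 A - a1 q0 B, q2' = -(a0 q2 - a1 q3) A, q3' = -(a1 q2 + a0 q3) A, where A = c0^2 - 3q0^2 + q1^2+q2^2+q3^2 and B = c0^2 - q0^2 + 3(q1^2+q2^2+q3^2). With L(q) = q0^2 - q1^2 - q2^2 - q3^2 - c0^2/2, at every point where L(q) = 0 the derivative of L along the vector field equals -2 a0 (2q0^2 - c0^2/2)^2. -/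
/-!
On the quadric `L = 0` one has `q1² + q2² + q3² = q0² - c0²/2`, which turns the two cubic
factors into `A = -(2q0² - c0²/2)` and `B = 2q0² - c0²/2`. The derivative of `L` along the field
is twice the Minkowski pairing of `q` with the field; there the `a1`-terms collect into
`2 a1 q0 q1 (A + B) = 0`, and the `a0`-terms into `2 a0 A (q0² + q1² + q2² + q3²)`, whose second
factor is again `2q0² - c0²/2`.
-/

theorem fderiv_minkowski_sq_sub_const_apply (c : ℝ) (p v : ℝ × ℝ × ℝ × ℝ) :
    fderiv ℝ (fun q : ℝ × ℝ × ℝ × ℝ => q.1 ^ 2 - q.2.1 ^ 2 - q.2.2.1 ^ 2 - q.2.2.2 ^ 2 - c) p v =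
      2 * (p.1 * v.1 - p.2.1 * v.2.1 - p.2.2.1 * v.2.2.1 - p.2.2.2 * v.2.2.2) := by
  have hsnd : HasFDerivAt (fun q : ℝ × ℝ × ℝ × ℝ => q.2) _ p := hasFDerivAt_snd (𝕜 := ℝ)
  have h : HasFDerivAt
      (fun q : ℝ × ℝ × ℝ × ℝ => q.1 ^ 2 - q.2.1 ^ 2 - q.2.2.1 ^ 2 - q.2.2.2 ^ 2 - c) _ p :=
    ((((hasFDerivAt_fst.pow 2).sub (hsnd.fst.pow 2)).sub (hsnd.snd.fst.pow 2)).sub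
      (hsnd.snd.snd.pow 2)).sub_const c
  rw [h.fderiv]
  simp only [Nat.add_one_sub_one, pow_one, nsmul_eq_mul, Nat.cast_ofNat,
    sub_apply, smul_apply, ContinuousLinearMap.coe_fst',
    smul_eq_mul, ContinuousLinearMap.comp_apply, ContinuousLinearMap.coe_snd']
  ring

theorem minkowski_pairing_cubic_field_of_quadric (a0 a1 c0 q0 q1 q2 q3 A B : ℝ)
    (hA : A = c0 ^ 2 - 3 * q0 ^ 2 + q1 ^ 2 + q2 ^ 2 + q3 ^ 2)
    (hB : B = c0 ^ 2 - q0 ^ 2 + 3 * (q1 ^ 2 + q2 ^ 2 + q3 ^ 2))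
    (hq : q0 ^ 2 - q1 ^ 2 - q2 ^ 2 - q3 ^ 2 - c0 ^ 2 / 2 = 0) :
    2 * (q0 * (a1 * q1 * A - a0 * q0 * B) - q1 * (-(a0 * q1 * A) - a1 * q0 * B)
        - q2 * -((a0 * q2 - a1 * q3) * A) - q3 * -((a1 * q2 + a0 * q3) * A)) =
      -2 * a0 * (2 * q0 ^ 2 - c0 ^ 2 / 2) ^ 2 := by
  have hN : q1 ^ 2 + q2 ^ 2 + q3 ^ 2 = q0 ^ 2 - c0 ^ 2 / 2 := by linarith
  have hA' : A = -(2 * q0 ^ 2 - c0 ^ 2 / 2) := by rw [hA]; linarith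
  have hB' : B = 2 * q0 ^ 2 - c0 ^ 2 / 2 := by rw [hB]; linarith
  subst hA' hB'
  linear_combination (-2 * a0 * (2 * q0 ^ 2 - c0 ^ 2 / 2)) * hN

/-- For the component form of the cubic quaternion equation
`q' = a(q - c0)(q + c0)q` with `a = a0 + a1 i`, at every point of the quadric
`L = q0² - q1² - q2² - q3² - c0²/2 = 0`, the derivative of `L` along the
vector field equals `-2 a0 (2q0² - c0²/2)²`. -/
theorem L_derivative_cubic (a0 a1 c0 : ℝ)
    (A B : ℝ × ℝ × ℝ × ℝ → ℝ)
    (hA : A = fun p => c0 ^ 2 - 3 * p.1 ^ 2 + p.2.1 ^ 2 + p.2.2.1 ^ 2 + p.2.2.2 ^ 2)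
    (hB : B = fun p => c0 ^ 2 - p.1 ^ 2 + 3 * (p.2.1 ^ 2 + p.2.2.1 ^ 2 + p.2.2.2 ^ 2))
    (V : ℝ × ℝ × ℝ × ℝ → ℝ × ℝ × ℝ × ℝ)
    (hV : V = fun p =>
      (a1 * p.2.1 * A p - a0 * p.1 * B p,
       -(a0 * p.2.1 * A p) - a1 * p.1 * B p,
       -((a0 * p.2.2.1 - a1 * p.2.2.2) * A p),
       -((a1 * p.2.2.1 + a0 * p.2.2.2) * A p)))
    (L : ℝ × ℝ × ℝ × ℝ → ℝ)
    (hL : L = fun p => p.1 ^ 2 - p.2.1 ^ 2 - p.2.2.1 ^ 2 - p.2.2.2 ^ 2 - c0 ^ 2 / 2)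
    (p : ℝ × ℝ × ℝ × ℝ) (hp : L p = 0) :
    fderiv ℝ L p (V p) = -2 * a0 * (2 * p.1 ^ 2 - c0 ^ 2 / 2) ^ 2 := by
  subst hL hV
  rw [fderiv_minkowski_sq_sub_const_apply]
  exact minkowski_pairing_cubic_field_of_quadric a0 a1 c0 _ _ _ _ _ _
    (congrFun hA p) (congrFun hB p) hp
end

section
/- Consider the vector field on ℝ^4 given by the cubic quaternion equation q' = a(q-c0)(q+c0)q with a = a0 + a1 i (component form as in the paper) and let H(q) = (q0^2+q1^2+q2^2+q3^2)^2 / (q0^2 - q1^2 - q2^2 - q3^2 - c0^2/2). Then dH/dt = 8 a0 N (q0^2+q1^2+q2^2+q3^2)^2 / (c0^2 - 2(q0^2-q1^2-q2^2-q3^2))^2, where N = c0^4 - 2c0^2(q0^2-q1^2-q2^2-q3^2) + (q0^2+q1^2+q2^2+q3^2)^2. In particular H is a first integral when a0 = 0. -/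
/-!
Write `S = |q|²` and `D = q0² - |q⃗|² - c0²/2`, so that `H = S² / D`. Along the field, the
`a1`-part changes `S` at the rate `-4 a1 q0 q1 · S` and `D` at the rate `-8 a1 q0 q1 · D`; since
`H` is homogeneous of degree `2` in `S` and `-1` in `D`, these contributions cancel in `dH/dt`,
and what remains of the `a0`-part collapses to `2 a0 N S² / D²`.
-/

open ContinuousLinearMap

local notation "ℝ⁴" => ℝ × ℝ × ℝ × ℝ

section
variable {𝕜 E : Type*} [NontriviallyNormedField 𝕜] [NormedAddCommGroup E] [NormedSpace 𝕜 E]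

theorem fderiv_sq_div_apply {f g : E → 𝕜} {x : E} (hf : DifferentiableAt 𝕜 f x)
    (hg : DifferentiableAt 𝕜 g x) (hx : g x ≠ 0) (v : E) :
    fderiv 𝕜 (fun y => f y ^ 2 / g y) x v =
      f x * (2 * g x * fderiv 𝕜 f x v - f x * fderiv 𝕜 g x v) / g x ^ 2 := by
  have h : HasFDerivAt (fun y => f y ^ 2 * (g y)⁻¹) _ x :=
    (hf.hasFDerivAt.pow 2).mul ((hasDerivAt_inv hx).comp_hasFDerivAt x hg.hasFDerivAt)
  simp only [div_eq_mul_inv]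
  rw [h.fderiv]
  simp only [Nat.add_one_sub_one, pow_one, nsmul_eq_mul, Nat.cast_ofNat, add_apply, smul_apply,
    smul_eq_mul]
  field_simp
  ring

theorem ContinuousLinearMap.hasFDerivAt_sq (ℓ : E →L[𝕜] 𝕜) (x : E) :
    HasFDerivAt (fun y => ℓ y ^ 2) ((2 * ℓ x) • ℓ) x := by
  simpa using ℓ.hasFDerivAt.pow 2

end

namespace CubicQuaternion

def sqNorm (p : ℝ⁴) : ℝ := p.1 ^ 2 + p.2.1 ^ 2 + p.2.2.1 ^ 2 + p.2.2.2 ^ 2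

def minkowskiSq (p : ℝ⁴) : ℝ := p.1 ^ 2 - p.2.1 ^ 2 - p.2.2.1 ^ 2 - p.2.2.2 ^ 2

def vectorField (a0 a1 c0 : ℝ) (p : ℝ⁴) : ℝ⁴ :=
  let A := c0 ^ 2 - 3 * p.1 ^ 2 + p.2.1 ^ 2 + p.2.2.1 ^ 2 + p.2.2.2 ^ 2
  let B := c0 ^ 2 - p.1 ^ 2 + 3 * (p.2.1 ^ 2 + p.2.2.1 ^ 2 + p.2.2.2 ^ 2)
  (a1 * p.2.1 * A - a0 * p.1 * B,
   -(a0 * p.2.1 * A) - a1 * p.1 * B,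
   -((a0 * p.2.2.1 - a1 * p.2.2.2) * A),
   -((a1 * p.2.2.1 + a0 * p.2.2.2) * A))

theorem differentiableAt_sqNorm (p : ℝ⁴) : DifferentiableAt ℝ sqNorm p := by
  unfold sqNorm
  fun_prop

theorem differentiableAt_minkowskiSq (p : ℝ⁴) : DifferentiableAt ℝ minkowskiSq p := by
  unfold minkowskiSq
  fun_prop

theorem fderiv_sqNorm_apply (p v : ℝ⁴) :
    fderiv ℝ sqNorm p v =
      2 * (p.1 * v.1 + p.2.1 * v.2.1 + p.2.2.1 * v.2.2.1 + p.2.2.2 * v.2.2.2) := by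
  unfold sqNorm
  have h : HasFDerivAt (fun q : ℝ⁴ => q.1 ^ 2 + q.2.1 ^ 2 + q.2.2.1 ^ 2 + q.2.2.2 ^ 2) _ p :=
    ((((fst ℝ ℝ _).hasFDerivAt_sq p).add (((fst ℝ ℝ _).comp (snd ℝ ℝ _)).hasFDerivAt_sq p)).add
      (((fst ℝ ℝ _).comp ((snd ℝ ℝ _).comp (snd ℝ ℝ _))).hasFDerivAt_sq p)).add
      (((snd ℝ ℝ _).comp ((snd ℝ ℝ _).comp (snd ℝ ℝ _))).hasFDerivAt_sq p)
  rw [h.fderiv]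
  simp only [coe_fst', comp_apply, coe_snd', add_apply, smul_apply, smul_eq_mul]
  ring

theorem fderiv_minkowskiSq_apply (p v : ℝ⁴) :
    fderiv ℝ minkowskiSq p v =
      2 * (p.1 * v.1 - p.2.1 * v.2.1 - p.2.2.1 * v.2.2.1 - p.2.2.2 * v.2.2.2) := by
  unfold minkowskiSq
  have h : HasFDerivAt (fun q : ℝ⁴ => q.1 ^ 2 - q.2.1 ^ 2 - q.2.2.1 ^ 2 - q.2.2.2 ^ 2) _ p :=
    ((((fst ℝ ℝ _).hasFDerivAt_sq p).sub (((fst ℝ ℝ _).comp (snd ℝ ℝ _)).hasFDerivAt_sq p)).sub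
      (((fst ℝ ℝ _).comp ((snd ℝ ℝ _).comp (snd ℝ ℝ _))).hasFDerivAt_sq p)).sub
      (((snd ℝ ℝ _).comp ((snd ℝ ℝ _).comp (snd ℝ ℝ _))).hasFDerivAt_sq p)
  rw [h.fderiv]
  simp only [coe_fst', comp_apply, coe_snd', sub_apply, smul_apply, smul_eq_mul]
  ring

variable (a0 a1 c0 : ℝ) (p : ℝ⁴)

theorem fderiv_sqNorm_vectorField :
    fderiv ℝ sqNorm p (vectorField a0 a1 c0 p) =
      -2 * (2 * a1 * p.1 * p.2.1 + a0 * (c0 ^ 2 - minkowskiSq p)) * sqNorm p := by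
  rw [fderiv_sqNorm_apply]
  simp only [vectorField, sqNorm, minkowskiSq]
  ring

theorem fderiv_minkowskiSq_vectorField :
    fderiv ℝ minkowskiSq p (vectorField a0 a1 c0 p) =
      -4 * (2 * a1 * p.1 * p.2.1) * (minkowskiSq p - c0 ^ 2 / 2) -
        2 * a0 * (c0 ^ 2 * minkowskiSq p - 2 * minkowskiSq p ^ 2 + sqNorm p ^ 2) := by
  rw [fderiv_minkowskiSq_apply]
  simp only [vectorField, sqNorm, minkowskiSq]
  ring

theorem fderiv_sqNorm_sq_div_vectorField (hp : minkowskiSq p - c0 ^ 2 / 2 ≠ 0) :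
    fderiv ℝ (fun q => sqNorm q ^ 2 / (minkowskiSq q - c0 ^ 2 / 2)) p (vectorField a0 a1 c0 p) =
      2 * a0 * (c0 ^ 4 - 2 * c0 ^ 2 * minkowskiSq p + sqNorm p ^ 2) * sqNorm p ^ 2 /
        (minkowskiSq p - c0 ^ 2 / 2) ^ 2 := by
  rw [fderiv_sq_div_apply (differentiableAt_sqNorm p)
    ((differentiableAt_minkowskiSq p).sub_const _) hp, fderiv_sub_const,
    fderiv_sqNorm_vectorField, fderiv_minkowskiSq_vectorField]
  ring

end CubicQuaternion

/-- For the component form of the cubic quaternion equation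
`q' = a(q - c0)(q + c0)q` with `a = a0 + a1 i`, the function
`H = (q0²+q1²+q2²+q3²)² / (q0²-q1²-q2²-q3² - c0²/2)` satisfies
`dH/dt = 8 a0 N (q0²+q1²+q2²+q3²)² / (c0² - 2(q0²-q1²-q2²-q3²))²` where
`N = c0⁴ - 2c0²(q0²-q1²-q2²-q3²) + (q0²+q1²+q2²+q3²)²`. In particular `H` is a
first integral when `a0 = 0`. -/
theorem H_derivative_cubic (a0 a1 c0 : ℝ)
    (A B : ℝ × ℝ × ℝ × ℝ → ℝ)
    (hA : A = fun p => c0 ^ 2 - 3 * p.1 ^ 2 + p.2.1 ^ 2 + p.2.2.1 ^ 2 + p.2.2.2 ^ 2)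
    (hB : B = fun p => c0 ^ 2 - p.1 ^ 2 + 3 * (p.2.1 ^ 2 + p.2.2.1 ^ 2 + p.2.2.2 ^ 2))
    (V : ℝ × ℝ × ℝ × ℝ → ℝ × ℝ × ℝ × ℝ)
    (hV : V = fun p =>
      (a1 * p.2.1 * A p - a0 * p.1 * B p,
       -(a0 * p.2.1 * A p) - a1 * p.1 * B p,
       -((a0 * p.2.2.1 - a1 * p.2.2.2) * A p),
       -((a1 * p.2.2.1 + a0 * p.2.2.2) * A p)))
    (H N : ℝ × ℝ × ℝ × ℝ → ℝ)
    (hH : H = fun p =>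
      (p.1 ^ 2 + p.2.1 ^ 2 + p.2.2.1 ^ 2 + p.2.2.2 ^ 2) ^ 2 /
        (p.1 ^ 2 - p.2.1 ^ 2 - p.2.2.1 ^ 2 - p.2.2.2 ^ 2 - c0 ^ 2 / 2))
    (hN : N = fun p =>
      c0 ^ 4 - 2 * c0 ^ 2 * (p.1 ^ 2 - p.2.1 ^ 2 - p.2.2.1 ^ 2 - p.2.2.2 ^ 2) +
        (p.1 ^ 2 + p.2.1 ^ 2 + p.2.2.1 ^ 2 + p.2.2.2 ^ 2) ^ 2)
    (p : ℝ × ℝ × ℝ × ℝ)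
    (hp : p.1 ^ 2 - p.2.1 ^ 2 - p.2.2.1 ^ 2 - p.2.2.2 ^ 2 - c0 ^ 2 / 2 ≠ 0) :
    fderiv ℝ H p (V p) =
      8 * a0 * N p * (p.1 ^ 2 + p.2.1 ^ 2 + p.2.2.1 ^ 2 + p.2.2.2 ^ 2) ^ 2 /
        (c0 ^ 2 - 2 * (p.1 ^ 2 - p.2.1 ^ 2 - p.2.2.1 ^ 2 - p.2.2.2 ^ 2)) ^ 2 ∧
    (a0 = 0 → fderiv ℝ H p (V p) = 0) := by
  have hdH : fderiv ℝ H p (V p) =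
      2 * a0 * N p * CubicQuaternion.sqNorm p ^ 2 /
        (CubicQuaternion.minkowskiSq p - c0 ^ 2 / 2) ^ 2 := by
    subst hA hB hV hH hN
    exact CubicQuaternion.fderiv_sqNorm_sq_div_vectorField a0 a1 c0 p hp
  have hden : c0 ^ 2 - 2 * (p.1 ^ 2 - p.2.1 ^ 2 - p.2.2.1 ^ 2 - p.2.2.2 ^ 2) =
      -2 * (CubicQuaternion.minkowskiSq p - c0 ^ 2 / 2) := by
    unfold CubicQuaternion.minkowskiSq
    ring
  refine ⟨?_, fun h0 => by rw [hdH, h0]; ring⟩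
  rw [hdH, hden]
  unfold CubicQuaternion.sqNorm
  generalize CubicQuaternion.minkowskiSq p - c0 ^ 2 / 2 = D
  ring
end
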